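/- arXiv:2510.08652 — 2 statements merged into one kernel-verified Lean document; each statement's English description precedes it below -/
import Mathlib

section
/- For every real number m, the second Taylor coefficient at 0 of the function t ↦ (t/(eᵗ−1))² · e^{(2−m)t} (equivalently, the constant term in the asymptotic expansion of e^{−mλ}/(1−e^{−λ})² as λ → 0⁺ after removing the divergent terms 1/λ² and (1−m)/λ) equals 5/12 − m + m²/2; moreover this quantity vanishes exactly when m = 1 + 1/√6 or m = 1 − 1/√6. -/
/-!
The function `E t = (eᵗ - 1) / t`, i.e. `dslope exp 0`, is analytic at `0` with Taylor coefficients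
`1 / (n + 1)!`, and `bernoulliGen * E = 1`. Hence `f t = bernoulliGen t ^ 2 * e^((2 - m) t)`
satisfies `f * E ^ 2 = e^((2 - m) t)`, and comparing Taylor coefficients of order `0, 1, 2`
(Leibniz rule) determines those of `f` successively as `1`, `1 - m` and `5/12 - m + m²/2`.
-/

/-- The `n`-th Taylor coefficient at `0` of a function `f : ℝ → ℝ`. -/
noncomputable def taylorCoeff (n : ℕ) (f : ℝ → ℝ) : ℝ :=
  iteratedDeriv n f 0 / n.factorial

/-- The function `t ↦ t / (eᵗ − 1)`, extended by the value `1` at `t = 0`. -/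
noncomputable def bernoulliGen (t : ℝ) : ℝ :=
  if t = 0 then 1 else t / (Real.exp t - 1)

open Finset Nat

section TaylorCoeff

variable {f g : ℝ → ℝ}

theorem taylorCoeff_eq_coeff {p : FormalMultilinearSeries ℝ ℝ ℝ} (hf : HasFPowerSeriesAt f p 0)
    (n : ℕ) : taylorCoeff n f = p.coeff n := by
  rw [hf.eq_formalMultilinearSeries hf.analyticAt.hasFPowerSeriesAt,
    FormalMultilinearSeries.coeff_ofScalars, taylorCoeff]

theorem taylorCoeff_mul {n : ℕ} (hf : ContDiffAt ℝ n f 0) (hg : ContDiffAt ℝ n g 0) :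
    taylorCoeff n (f * g) = ∑ p ∈ antidiagonal n, taylorCoeff p.1 f * taylorCoeff p.2 g := by
  rw [taylorCoeff, iteratedDeriv_mul hf hg,
    Nat.sum_antidiagonal_eq_sum_range_succ (fun i j => taylorCoeff i f * taylorCoeff j g),
    sum_div]
  refine sum_congr rfl fun i hi => ?_
  rw [cast_choose ℝ (Nat.lt_succ_iff.mp (mem_range.mp hi)), taylorCoeff, taylorCoeff]
  field_simp

end TaylorCoeff

theorem taylorCoeff_exp_const_mul (a : ℝ) (n : ℕ) :
    taylorCoeff n (fun t => Real.exp (a * t)) = a ^ n / n ! := by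
  simp [taylorCoeff]

theorem hasFPowerSeriesAt_dslope_exp :
    HasFPowerSeriesAt (dslope Real.exp 0) (NormedSpace.expSeries ℝ ℝ).fslope 0 := by
  rw [Real.exp_eq_exp_ℝ]
  exact (NormedSpace.hasFPowerSeriesAt_exp_zero_of_radius_pos
    (by simp [NormedSpace.expSeries_radius_eq_top])).has_fpower_series_dslope_fslope

theorem taylorCoeff_dslope_exp (n : ℕ) : taylorCoeff n (dslope Real.exp 0) = ((n + 1)! : ℝ)⁻¹ := by
  rw [taylorCoeff_eq_coeff hasFPowerSeriesAt_dslope_exp, FormalMultilinearSeries.coeff_fslope,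
    NormedSpace.expSeries_eq_ofScalars, FormalMultilinearSeries.coeff_ofScalars]

theorem bernoulliGen_mul_dslope_exp (t : ℝ) : bernoulliGen t * dslope Real.exp 0 t = 1 := by
  rcases eq_or_ne t 0 with rfl | ht
  · simp [bernoulliGen]
  · have : Real.exp t - 1 ≠ 0 := sub_ne_zero.mpr (Real.exp_eq_one_iff t |>.not.mpr ht)
    rw [bernoulliGen, if_neg ht, dslope_of_ne _ ht, slope_def_field, Real.exp_zero, sub_zero]
    field_simp

theorem analyticAt_bernoulliGen : AnalyticAt ℝ bernoulliGen 0 := by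
  have : bernoulliGen = (dslope Real.exp 0)⁻¹ :=
    funext fun t => eq_inv_of_mul_eq_one_left (bernoulliGen_mul_dslope_exp t)
  rw [this]
  exact hasFPowerSeriesAt_dslope_exp.analyticAt.inv (by simp)

theorem five_twelfths_sub_add_half_sq_eq_zero_iff (m : ℝ) :
    5 / 12 - m + m ^ 2 / 2 = 0 ↔ m = 1 + 1 / Real.sqrt 6 ∨ m = 1 - 1 / Real.sqrt 6 := by
  have h6 : (1 / Real.sqrt 6) ^ 2 = 1 / 6 := by simp
  have hsq : 5 / 12 - m + m ^ 2 / 2 = ((m - 1) ^ 2 - (1 / Real.sqrt 6) ^ 2) / 2 := by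
    rw [h6]; ring
  rw [hsq, div_eq_zero_iff, sub_eq_zero, sq_eq_sq_iff_eq_or_eq_neg, sub_eq_iff_eq_add',
    sub_eq_iff_eq_add', ← sub_eq_add_neg]
  simp

theorem shifted_smoothed_sum_of_naturals (m : ℝ) :
    taylorCoeff 2 (fun t => bernoulliGen t ^ 2 * Real.exp ((2 - m) * t)) =
        5 / 12 - m + m ^ 2 / 2 ∧
      (5 / 12 - m + m ^ 2 / 2 = 0 ↔
        m = 1 + 1 / Real.sqrt 6 ∨ m = 1 - 1 / Real.sqrt 6) := by
  refine ⟨?_, five_twelfths_sub_add_half_sq_eq_zero_iff m⟩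
  set E := dslope Real.exp 0
  set f := fun t => bernoulliGen t ^ 2 * Real.exp ((2 - m) * t)
  have hE : AnalyticAt ℝ E 0 := hasFPowerSeriesAt_dslope_exp.analyticAt
  have hf : AnalyticAt ℝ f 0 := (analyticAt_bernoulliGen.pow 2).mul (by fun_prop)
  have hfE : f * (E * E) = fun t => Real.exp ((2 - m) * t) := by
    ext t
    simp only [f, Pi.mul_apply]
    linear_combination
      (bernoulliGen t * E t + 1) * Real.exp ((2 - m) * t) * bernoulliGen_mul_dslope_exp t
  have hcoeff (n : ℕ) : ∑ p ∈ antidiagonal n, taylorCoeff p.1 f *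
      ∑ q ∈ antidiagonal p.2, taylorCoeff q.1 E * taylorCoeff q.2 E = (2 - m) ^ n / n ! := by
    rw [← taylorCoeff_exp_const_mul, ← hfE, taylorCoeff_mul hf.contDiffAt (hE.mul hE).contDiffAt]
    exact sum_congr rfl fun p _ => by rw [taylorCoeff_mul hE.contDiffAt hE.contDiffAt]
  have e0 : taylorCoeff 0 E = 1 := by simp [E, taylorCoeff_dslope_exp]
  have e1 : taylorCoeff 1 E = 1 / 2 := by norm_num [E, taylorCoeff_dslope_exp, factorial]
  have e2 : taylorCoeff 2 E = 1 / 6 := by norm_num [E, taylorCoeff_dslope_exp, factorial]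
  have h0 := hcoeff 0
  have h1 := hcoeff 1
  have h2 := hcoeff 2
  simp only [sum_antidiagonal_succ, antidiagonal_zero, sum_singleton, e0, e1, e2, factorial_zero,
    factorial_one, factorial_two, cast_one, cast_ofNat] at h0 h1 h2
  linear_combination h2 - h1 + 5 / 12 * h0
end

section
/- Let f be the function x ↦ x/(−log(1−x)) (extended by value 1 at x = 0) and let c_m(g) denote the m-th Taylor coefficient at 0 of an analytic function g. Then for all integers u ≥ 1 and m ≥ 1, one has u · c_m(f^{u+1}) = (u−m) · c_m(f^u) − (u−m+1) · c_{m−1}(f^u). Equivalently, the Gregory polynomials G_m^{(u)} = c_m(f^u)/u satisfy (u+1)·G_m^{(u+1)} = (u−m)·G_m^{(u)} − (u−m+1)·G_{m−1}^{(u)}. -/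
/-- The function `x ↦ x / (−log (1 − x))`, extended by the value `1` at `x = 0`. -/
noncomputable def gregoryGenNeg (x : ℝ) : ℝ :=
  if x = 0 then 1 else x / (-Real.log (1 - x))

/-!
Since `d/dx (−log (1 − x)) = 1/(1 − x)`, the function `f` satisfies the Riccati equation
`x (1 − x) f' = (1 − x) f − f²`, hence `u f^(u+1) = (1 − x) (u f^u − x (f^u)')` near `0`.
Comparing the coefficients of `x^m`, where the Euler operator `x d/dx` multiplies the `m`-th
coefficient by `m` and multiplication by `1 − x` takes differences of consecutive coefficients,
gives the recursion.
-/

open Filter Topology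

section TaylorCoeff

variable {f g : ℝ → ℝ} {n : ℕ}

lemma taylorCoeff_congr (h : f =ᶠ[𝓝 0] g) : taylorCoeff n f = taylorCoeff n g := by
  rw [taylorCoeff, taylorCoeff, h.iteratedDeriv_eq]

lemma taylorCoeff_const_mul (c : ℝ) :
    taylorCoeff n (fun x => c * f x) = c * taylorCoeff n f := by
  simp only [taylorCoeff, iteratedDeriv_const_mul_field, mul_div_assoc]

lemma taylorCoeff_sub (hf : ContDiffAt ℝ n f 0) (hg : ContDiffAt ℝ n g 0) :
    taylorCoeff n (fun x => f x - g x) = taylorCoeff n f - taylorCoeff n g := by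
  rw [taylorCoeff, iteratedDeriv_fun_sub hf hg, sub_div, taylorCoeff, taylorCoeff]

lemma taylorCoeff_deriv :
    taylorCoeff n (deriv f) = (n + 1) * taylorCoeff (n + 1) f := by
  rw [taylorCoeff, taylorCoeff, ← iteratedDeriv_succ', Nat.factorial_succ]
  push_cast
  field_simp

lemma taylorCoeff_succ_id_mul (hf : ContDiffAt ℝ (n + 1 : ℕ) f 0) :
    taylorCoeff (n + 1) (fun x => x * f x) = taylorCoeff n f := by
  have hL : iteratedDeriv (n + 1) (fun x => x * f x) 0 = (n + 1) * iteratedDeriv n f 0 := by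
    rw [iteratedDeriv_fun_mul contDiffAt_fun_id hf, Finset.sum_eq_single 1]
    · simp [iteratedDeriv_fun_id_zero]
    · intro i _ hi
      simp [iteratedDeriv_fun_id_zero, hi]
    · simp
  rw [taylorCoeff, taylorCoeff, hL, Nat.factorial_succ]
  push_cast
  field_simp

lemma taylorCoeff_id_mul_deriv (hf : ContDiffAt ℝ n (deriv f) 0) :
    taylorCoeff n (fun x => x * deriv f x) = n * taylorCoeff n f := by
  cases n with
  | zero => simp [taylorCoeff]
  | succ k => rw [taylorCoeff_succ_id_mul hf, taylorCoeff_deriv]; push_cast; ring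

lemma taylorCoeff_succ_one_sub_mul (hf : ContDiffAt ℝ (n + 1 : ℕ) f 0) :
    taylorCoeff (n + 1) (fun x => (1 - x) * f x) = taylorCoeff (n + 1) f - taylorCoeff n f := by
  simp_rw [one_sub_mul]
  rw [taylorCoeff_sub hf (contDiffAt_fun_id.mul hf), taylorCoeff_succ_id_mul hf]

end TaylorCoeff

lemma hasDerivAt_neg_log_one_sub {x : ℝ} (hx : x ≠ 1) :
    HasDerivAt (fun y => -Real.log (1 - y)) (1 - x)⁻¹ x := by
  simpa [neg_div, one_div] using
    (((hasDerivAt_id' x).const_sub 1).log (sub_ne_zero.mpr hx.symm)).fun_neg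

lemma gregoryGenNeg_eq_inv_dslope :
    gregoryGenNeg = (dslope (fun x => -Real.log (1 - x)) 0)⁻¹ := by
  ext x
  rcases eq_or_ne x 0 with rfl | hx
  · simp [gregoryGenNeg, dslope_same, (hasDerivAt_neg_log_one_sub zero_ne_one).deriv]
  · simp [gregoryGenNeg, hx, dslope_of_ne _ hx, slope_def_field]

lemma analyticAt_gregoryGenNeg : AnalyticAt ℝ gregoryGenNeg 0 := by
  obtain ⟨p, hp⟩ : AnalyticAt ℝ (fun x => -Real.log (1 - x)) 0 := by fun_prop (disch := norm_num)
  rw [gregoryGenNeg_eq_inv_dslope]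
  refine AnalyticAt.inv ⟨_, hp.has_fpower_series_dslope_fslope⟩ ?_
  simp [dslope_same, (hasDerivAt_neg_log_one_sub zero_ne_one).deriv]

lemma gregoryGenNeg_ode {x : ℝ} (hx : x < 1) :
    x * (1 - x) * deriv gregoryGenNeg x = (1 - x) * gregoryGenNeg x - gregoryGenNeg x ^ 2 := by
  rcases eq_or_ne x 0 with rfl | hx0
  · simp [gregoryGenNeg]
  have hL : -Real.log (1 - x) ≠ 0 := neg_ne_zero.mpr <|
    Real.log_ne_zero_of_pos_of_ne_one (by linarith) (by simpa using hx0)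
  have hf : gregoryGenNeg =ᶠ[𝓝 x] fun y => y / -Real.log (1 - y) := by
    filter_upwards [eventually_ne_nhds hx0] with y hy
    simp [gregoryGenNeg, hy]
  rw [hf.deriv_eq, ((hasDerivAt_id' x).fun_div (hasDerivAt_neg_log_one_sub hx.ne) hL).deriv,
    hf.eq_of_nhds]
  have : (1 : ℝ) - x ≠ 0 := by linarith
  field_simp

lemma gregoryGenNeg_pow_eventuallyEq (u : ℕ) :
    (fun x => (u : ℝ) * gregoryGenNeg x ^ (u + 1)) =ᶠ[𝓝 0]
      fun x => (1 - x) * (u * gregoryGenNeg x ^ u - x * deriv (fun y => gregoryGenNeg y ^ u) x) := by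
  filter_upwards [analyticAt_gregoryGenNeg.eventually_analyticAt, eventually_lt_nhds zero_lt_one]
    with x hfx hx
  rw [deriv_fun_pow hfx.differentiableAt]
  have ode := gregoryGenNeg_ode hx
  cases u with
  | zero => simp
  | succ v =>
    simp only [Nat.add_sub_cancel]
    push_cast
    linear_combination ((v : ℝ) + 1) * gregoryGenNeg x ^ v * ode

theorem gregory_polynomial_recursion_general (u : ℕ) (m : ℕ) (hm : 1 ≤ m) :
    (u : ℝ) * taylorCoeff m (fun x => gregoryGenNeg x ^ (u + 1)) =
      ((u : ℝ) - m) * taylorCoeff m (fun x => gregoryGenNeg x ^ u) -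
        ((u : ℝ) - m + 1) * taylorCoeff (m - 1) (fun x => gregoryGenNeg x ^ u) := by
  obtain ⟨k, rfl⟩ : ∃ k, m = k + 1 := ⟨m - 1, by omega⟩
  set F := fun x => gregoryGenNeg x ^ u
  have hF : AnalyticAt ℝ F 0 := analyticAt_gregoryGenNeg.pow u
  set K := fun x => u * F x - x * deriv F x
  have huF : AnalyticAt ℝ (fun x => u * F x) 0 := by fun_prop
  have hxF' : AnalyticAt ℝ (fun x => x * deriv F x) 0 := by fun_prop
  have hK : AnalyticAt ℝ K 0 := huF.sub hxF'
  have hcK (j : ℕ) : taylorCoeff j K = (u - j) * taylorCoeff j F := by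
    rw [taylorCoeff_sub huF.contDiffAt hxF'.contDiffAt, taylorCoeff_const_mul,
      taylorCoeff_id_mul_deriv hF.deriv.contDiffAt]
    ring
  have hcoeff : u * taylorCoeff (k + 1) (fun x => gregoryGenNeg x ^ (u + 1)) =
      taylorCoeff (k + 1) (fun x => (1 - x) * K x) := by
    rw [← taylorCoeff_const_mul]
    exact taylorCoeff_congr (gregoryGenNeg_pow_eventuallyEq u)
  rw [hcoeff, taylorCoeff_succ_one_sub_mul hK.contDiffAt, hcK, hcK, Nat.add_sub_cancel]
  push_cast
  ring

theorem gregory_polynomial_recursion (u : ℕ) (hu : 1 ≤ u) (m : ℕ) (hm : 1 ≤ m) :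
    (u : ℝ) * taylorCoeff m (fun x => gregoryGenNeg x ^ (u + 1)) =
      ((u : ℝ) - m) * taylorCoeff m (fun x => gregoryGenNeg x ^ u) -
        ((u : ℝ) - m + 1) * taylorCoeff (m - 1) (fun x => gregoryGenNeg x ^ u) :=
  gregory_polynomial_recursion_general u m hm
end
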